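/- arXiv:1311.1912 — 4 statements merged into one kernel-verified Lean document; each statement's English description precedes it below -/
import Mathlib

section
/- There exists a structure (M, L, τ, a₀, a₁, a₂) with M of cardinality 3 in which axioms A3, B2, B3, B4, B6, B7 and B8 all hold but axiom B1 fails (i.e., there exist a, b, c with L(a,b,c) and ¬L(b,a,c)). -/
private def gB : Fin 3 → Fin 3 → Fin 3 := fun b c => if b = c then b else 0

private def LB : Fin 3 → Fin 3 → Fin 3 → Bool := fun a b c =>
  c = a || (c = 0 && (b = a || b = 0))

/-- There is a 3-element model of Σ♯ \ {B1} in which B1 fails. -/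
theorem b1_independent_of_sigma_sharp :
    ∃ (M : Type) (L : M → M → M → Prop) (τ : M → M → M → M) (a₀ a₁ a₂ : M),
      Nat.card M = 3 ∧
      (∀ a b c d : M, a ≠ b ∧ L a b c ∧ L a b d → L a c d) ∧
      (∀ a b c : M, τ a b c = τ a c b) ∧
      (∀ a b : M, L a b (τ b a a)) ∧
      (∀ a b c x : M, L a b c → L x (τ a b x) (τ a c x)) ∧
      (∀ a b c x : M, τ a b x = τ c (τ a b x) x) ∧
      ¬ L a₀ a₁ a₂ ∧
      (∀ a b : M, τ b a a = b → a = b) ∧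
      (∃ a b c : M, L a b c ∧ ¬ L b a c) := by
  refine ⟨Fin 3, fun a b c => LB a b c = true, fun _ b c => gB b c, 0, 1, 2, ?_, ?_⟩
  · simp [Nat.card_eq_fintype_card]
  · refine ⟨?_, ?_, ?_, ?_, ?_, ?_, ?_, ?_⟩ <;> decide
end

section
/- There exists a structure (M, L, τ, a₀, a₁, a₂) with M finite of cardinality 27 in which axioms A3, B1, B2, B3, B6, B7 and B8 all hold but axiom B4 fails (i.e., there exist a, b, c, x with L(a,b,c) and ¬L(x, τ(a,b,x), τ(a,c,x))). Hence B4 is an independent axiom of Σ♯ with a finite independence model. -/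
abbrev MM := ZMod 3 × ZMod 3 × ZMod 3

/-- meet with bottom 0: `u` if `u = v`, else `0`. -/
def m3 (u v : ZMod 3) : ZMod 3 := if u = v then u else 0

def tau3 (_a b c : MM) : MM := (m3 b.1 c.1, m3 b.2.1 c.2.1, m3 b.2.2 c.2.2)

def L3 (a b c : MM) : Prop := ∃ t : ZMod 3, c - a = t • (b - a) ∨ b - a = t • (c - a)

lemma zmod3_sq : ∀ t : ZMod 3, t = 0 ∨ t * t = 1 := by decide

lemma m3_comm : ∀ u v, m3 u v = m3 v u := by decide
lemma m3_idem : ∀ u, m3 u u = u := by decide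
lemma m3_abs : ∀ u v, m3 (m3 u v) v = m3 u v := by decide

lemma tau3_self (b a : MM) : tau3 b a a = a := by
  simp [tau3, m3_idem]

lemma L3_deg (a c : MM) : L3 a a c :=
  ⟨0, Or.inr (by simp)⟩

lemma L3_norm {a b c : MM} (h : L3 a b c) :
    (∃ t : ZMod 3, c - a = t • (b - a)) ∨ b = a := by
  rcases h with ⟨t, h | h⟩
  · exact Or.inl ⟨t, h⟩
  · rcases zmod3_sq t with ht | ht
    · subst ht
      simp only [zero_smul] at h
      exact Or.inr (sub_eq_zero.mp h)
    · left
      refine ⟨t, ?_⟩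
      have := congrArg (fun v => t • v) h
      simpa [smul_smul, ht] using this.symm

lemma L3_A3 : ∀ a b c d : MM, a ≠ b ∧ L3 a b c ∧ L3 a b d → L3 a c d := by
  rintro a b c d ⟨hab, hc, hd⟩
  rcases L3_norm hc with ⟨t, ht⟩ | hba
  · rcases L3_norm hd with ⟨s, hs⟩ | hba
    · rcases zmod3_sq t with h0 | h1
      · subst h0
        simp only [zero_smul] at ht
        refine ⟨0, Or.inr ?_⟩
        rw [ht]; simp
      · refine ⟨s * t, Or.inl ?_⟩
        rw [hs, ht, smul_smul, mul_assoc, h1, mul_one]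
    · exact absurd hba.symm hab
  · exact absurd hba.symm hab

lemma L3_B1 : ∀ a b c : MM, L3 a b c → L3 b a c := by
  intro a b c h
  rcases L3_norm h with ⟨t, ht⟩ | hba
  · refine ⟨1 - t, Or.inl ?_⟩
    have : c - b = (c - a) - (b - a) := by abel
    rw [this, ht, sub_smul, one_smul]
    have : a - b = -(b - a) := by abel
    rw [this]; module
  · rw [hba]; exact L3_deg a c

/-- There is a finite model of Σ♯ \ {B4} of cardinality 27
in which B4 fails; hence B4 is independent in Σ♯ with a finite independence model. -/
theorem b4_independent_of_sigma_sharp :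
    ∃ (M : Type) (L : M → M → M → Prop) (τ : M → M → M → M) (a₀ a₁ a₂ : M),
      Finite M ∧ Nat.card M = 27 ∧
      (∀ a b c d : M, a ≠ b ∧ L a b c ∧ L a b d → L a c d) ∧
      (∀ a b c : M, L a b c → L b a c) ∧
      (∀ a b c : M, τ a b c = τ a c b) ∧
      (∀ a b : M, L a b (τ b a a)) ∧
      (∀ a b c x : M, τ a b x = τ c (τ a b x) x) ∧
      ¬ L a₀ a₁ a₂ ∧
      (∀ a b : M, τ b a a = b → a = b) ∧
      (∃ a b c x : M, L a b c ∧ ¬ L x (τ a b x) (τ a c x)) := by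
  refine ⟨MM, L3, tau3, (0,0,0), (1,0,0), (0,1,0), inferInstance, ?_, L3_A3, L3_B1,
    ?_, ?_, ?_, ?_, ?_, ?_⟩
  · simp [Nat.card_eq_fintype_card]
  · intro a b c
    simp [tau3, m3_comm]
  · intro a b
    rw [tau3_self]
    exact ⟨0, Or.inl (by simp)⟩
  · intro a b c x
    simp [tau3, m3_abs]
  · unfold L3; decide
  · intro a b h
    rw [tau3_self] at h
    exact h
  · refine ⟨(0,0,0), (1,1,1), (2,2,2), (1,2,0), ?_, ?_⟩
    · exact ⟨2, Or.inl (by decide)⟩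
    · unfold L3 tau3; decide
end

section
/- There exists a structure (M, L, τ, a₀, a₁, a₂) with M of cardinality 2 in which axioms A3, B1, B2, B3, B4, B6 and B7 all hold but axiom B8 fails (i.e., there exist a, b with σ(a,b) = b and a ≠ b). -/
/-- There is a 2-element model of Σ♯ \ {B8} in which B8 fails. -/
theorem b8_independent_of_sigma_sharp :
    ∃ (M : Type) (L : M → M → M → Prop) (τ : M → M → M → M) (a₀ a₁ a₂ : M),
      Nat.card M = 2 ∧
      (∀ a b c d : M, a ≠ b ∧ L a b c ∧ L a b d → L a c d) ∧
      (∀ a b c : M, L a b c → L b a c) ∧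
      (∀ a b c : M, τ a b c = τ a c b) ∧
      (∀ a b : M, L a b (τ b a a)) ∧
      (∀ a b c x : M, L a b c → L x (τ a b x) (τ a c x)) ∧
      (∀ a b c x : M, τ a b x = τ c (τ a b x) x) ∧
      ¬ L a₀ a₁ a₂ ∧
      (∃ a b : M, τ b a a = b ∧ a ≠ b) := by
  refine ⟨Bool, fun _ _ c => c = false, fun _ _ _ => false, true, true, true,
    ?_, ?_, ?_, ?_, ?_, ?_, ?_, ?_, ⟨true, false, rfl, by simp⟩⟩ <;> simp
end

section
/- The axiom system Σ♯ = {A3, B1, B2, B3, B4, B6, B7, B8} is completely independent: for every subset A of these eight axioms, there exists a structure (M, L, τ, a₀, a₁, a₂) in which every axiom in A holds and every axiom in Σ♯ \ A fails. -/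
set_option exponentiation.threshold 4096
set_option maxHeartbeats 4000000

namespace SigmaSharpIndep

abbrev Pt := Fin 5

/-- bit lookup in a mask -/
def getb (m i : Nat) : Bool := (m / 2 ^ i) % 2 == 1

/-- base-8 digit lookup in a mask -/
def gett (m i : Nat) : Nat := (m / 8 ^ i) % 8

def fidx (a b c : Pt) : Nat := a.val * 25 + b.val * 5 + c.val

def f3idx (a b c : Pt) : Nat := min a.val 2 * 9 + min b.val 2 * 3 + min c.val 2

def mkPt (v : Nat) : Pt := ⟨v % 5, Nat.mod_lt _ (by norm_num)⟩

def LS0 : Pt → Pt → Pt → Bool := fun a b c => getb 81752063 (f3idx a b c)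
def LS1 : Pt → Pt → Pt → Bool := fun a b c => getb 76768767 (f3idx a b c)
def LS3 : Pt → Pt → Pt → Bool := fun a b c => getb 76695844 (f3idx a b c)
def LS4 : Pt → Pt → Pt → Bool := fun a b c => getb 41163176870380959493497943595438920008 (fidx a b c)
def LNp : Pt → Pt → Pt → Bool := fun a b c => getb 41163189546887717354440476705455832008 (fidx a b c)
def Ltr : Pt → Pt → Pt → Bool := fun _ _ _ => true

def t4 : Pt → Pt → Pt → Pt := fun a b c => mkPt (gett 42415679819142004784709974252698455940750056282057052826983133669231070355221015808981702106685993883989235254923 (fidx a b c))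
def tmax : Pt → Pt → Pt → Pt := fun _ b c => max b c
def tsnd : Pt → Pt → Pt → Pt := fun _ b _ => b
def t5 : Pt → Pt → Pt → Pt := fun a b c => if a = 0 then max b c else min b c
def tc2 : Pt → Pt → Pt → Pt := fun _ _ _ => 2

def specL : Fin 8 → (Pt → Pt → Pt → Bool) := ![LS0, LS1, Ltr, LS3, LS4, Ltr, Ltr, Ltr]
def trueL : Fin 8 → (Pt → Pt → Pt → Bool) := ![Ltr, Ltr, Ltr, Ltr, Ltr, Ltr, LNp, Ltr]
def specT : Fin 8 → (Pt → Pt → Pt → Pt) := ![tmax, tmax, tsnd, tmax, t4, t5, tmax, tc2]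
def trueT : Fin 8 → (Pt → Pt → Pt → Pt) := ![tmax, tmax, tmax, tmax, tmax, tmax, t4, tmax]
def pbase : Fin 8 → Pt := ![2, 2, 2, 2, 1, 2, 1, 2]

def selL (i : Fin 8) (b : Bool) : Pt → Pt → Pt → Bool := if b then trueL i else specL i
def selT (i : Fin 8) (b : Bool) : Pt → Pt → Pt → Pt := if b then trueT i else specT i

/-! ### factor properties -/

abbrev pa3 (L : Pt → Pt → Pt → Bool) : Prop :=
  ∀ a b c d : Pt, a ≠ b → L a b c = true → L a b d = true → L a c d = true
abbrev pd (L : Pt → Pt → Pt → Bool) : Prop :=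
  ∀ a c d : Pt, L a a c = true → L a a d = true → L a c d = true
abbrev pb1 (L : Pt → Pt → Pt → Bool) : Prop :=
  ∀ a b c : Pt, L a b c = true → L b a c = true
abbrev pb2 (t : Pt → Pt → Pt → Pt) : Prop := ∀ a b c : Pt, t a b c = t a c b
abbrev pb3 (L : Pt → Pt → Pt → Bool) (t : Pt → Pt → Pt → Pt) : Prop :=
  ∀ a b : Pt, L a b (t b a a) = true
abbrev pb4 (L : Pt → Pt → Pt → Bool) (t : Pt → Pt → Pt → Pt) : Prop :=
  ∀ a b c x : Pt, L a b c = true → L x (t a b x) (t a c x) = true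
abbrev pb6 (t : Pt → Pt → Pt → Pt) : Prop := ∀ a b c x : Pt, t a b x = t c (t a b x) x
abbrev pb8 (t : Pt → Pt → Pt → Pt) : Prop := ∀ a b : Pt, t b a a = b → a = b

lemma hA3 : ∀ (i : Fin 8) (b : Bool), (i = 0 → b = true) → pa3 (selL i b) := by decide
lemma hPD : ∀ (i : Fin 8) (b : Bool), pd (selL i b) := by decide
lemma hB1 : ∀ (i : Fin 8) (b : Bool), (i = 1 → b = true) → pb1 (selL i b) := by decide
lemma hB2 : ∀ (i : Fin 8) (b : Bool), (i = 2 → b = true) → pb2 (selT i b) := by decide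
lemma hB3 : ∀ (i : Fin 8) (b : Bool), (i = 3 → b = true) → pb3 (selL i b) (selT i b) := by decide
lemma hB4 : ∀ (i : Fin 8) (b : Bool), (i = 4 → b = true) → pb4 (selL i b) (selT i b) := by decide
lemma hB6 : ∀ (i : Fin 8) (b : Bool), (i = 5 → b = true) → pb6 (selT i b) := by decide
lemma hB8 : ∀ (i : Fin 8) (b : Bool), (i = 7 → b = true) → pb8 (selT i b) := by decide
lemma hZ : ∀ (i : Fin 8) (b : Bool),
    selL i b (pbase i) (pbase i) (pbase i) = true ∧
      selT i b (pbase i) (pbase i) (pbase i) = pbase i := by decide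

/-! ### the product structure -/

abbrev PM := Fin 8 → Pt

def PL (f : Fin 8 → Bool) (a b c : PM) : Prop :=
  ∀ i, selL i (f i) (a i) (b i) (c i) = true
def PT (f : Fin 8 → Bool) (a b c : PM) : PM :=
  fun i => selT i (f i) (a i) (b i) (c i)

def emb (k : Fin 8) (v : Pt) : PM := fun j => if j = k then v else pbase j

lemma emb_self (k : Fin 8) (v : Pt) : emb k v k = v := by simp [emb]
lemma emb_ne {i k : Fin 8} (h : i ≠ k) (v : Pt) : emb k v i = pbase i := by simp [emb, h]

lemma PL_emb (f : Fin 8 → Bool) (k : Fin 8) {u v w : Pt}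
    (h : selL k (f k) u v w = true) : PL f (emb k u) (emb k v) (emb k w) := by
  intro i
  by_cases hi : i = k
  · subst hi; rw [emb_self, emb_self, emb_self]; exact h
  · rw [emb_ne hi, emb_ne hi, emb_ne hi]; exact (hZ i (f i)).1

lemma PT_emb (f : Fin 8 → Bool) (k : Fin 8) (u v w : Pt) :
    PT f (emb k u) (emb k v) (emb k w) = emb k (selT k (f k) u v w) := by
  funext i
  by_cases hi : i = k
  · subst hi; simp only [PT, emb_self]
  · simp only [PT, emb_ne hi]; exact (hZ i (f i)).2

lemma emb_injective (k : Fin 8) {u v : Pt} (h : emb k u = emb k v) : u = v := by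
  have := congrFun h k
  rwa [emb_self, emb_self] at this

end SigmaSharpIndep

open SigmaSharpIndep in
/-- Σ♯ = {A3, B1, B2, B3, B4, B6, B7, B8} is completely independent:
for every subset of the eight axioms (encoded by a Boolean selection function
`f : Fin 8 → Bool`), there is a structure in which exactly the selected axioms
hold and all the others fail. -/
theorem sigma_sharp_completely_independent :
    ∀ f : Fin 8 → Bool,
      ∃ (M : Type) (L : M → M → M → Prop) (τ : M → M → M → M) (a₀ a₁ a₂ : M),
        ((∀ a b c d : M, a ≠ b ∧ L a b c ∧ L a b d → L a c d) ↔ f 0 = true) ∧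
        ((∀ a b c : M, L a b c → L b a c) ↔ f 1 = true) ∧
        ((∀ a b c : M, τ a b c = τ a c b) ↔ f 2 = true) ∧
        ((∀ a b : M, L a b (τ b a a)) ↔ f 3 = true) ∧
        ((∀ a b c x : M, L a b c → L x (τ a b x) (τ a c x)) ↔ f 4 = true) ∧
        ((∀ a b c x : M, τ a b x = τ c (τ a b x) x) ↔ f 5 = true) ∧
        ((¬ L a₀ a₁ a₂) ↔ f 6 = true) ∧
        ((∀ a b : M, τ b a a = b → a = b) ↔ f 7 = true) := by
  intro f
  refine ⟨PM, PL f, PT f, emb 6 0, emb 6 0, emb 6 0, ?_, ?_, ?_, ?_, ?_, ?_, ?_, ?_⟩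
  · -- A3
    cases h0 : f 0 with
    | true =>
      refine iff_of_true ?_ rfl
      rintro a b c d ⟨hne, h1, h2⟩ i
      by_cases he : a i = b i
      · have h1' := h1 i; have h2' := h2 i
        rw [he] at h1' h2' ⊢
        exact hPD i (f i) _ _ _ h1' h2'
      · exact hA3 i (f i) (fun hi => by rw [hi]; exact h0) _ _ _ _ he (h1 i) (h2 i)
    | false =>
      refine iff_of_false ?_ (by simp [h0])
      intro hax
      have hcon := hax (emb 0 1) (emb 0 0) (emb 0 1) (emb 0 0)
        ⟨fun h => absurd (congrFun h 0) (by decide),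
         PL_emb f 0 (by rw [h0]; decide), PL_emb f 0 (by rw [h0]; decide)⟩
      have key : selL 0 (f 0) 1 1 0 = true := hcon 0
      rw [h0] at key
      exact absurd key (by decide)
  · -- B1
    cases h1 : f 1 with
    | true =>
      refine iff_of_true ?_ rfl
      intro a b c h i
      exact hB1 i (f i) (fun hi => by rw [hi]; exact h1) _ _ _ (h i)
    | false =>
      refine iff_of_false ?_ (by simp [h1])
      intro hax
      have hcon := hax (emb 1 0) (emb 1 1) (emb 1 0) (PL_emb f 1 (by rw [h1]; decide))
      have key : selL 1 (f 1) 1 0 0 = true := hcon 1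
      rw [h1] at key
      exact absurd key (by decide)
  · -- B2
    cases h2 : f 2 with
    | true =>
      refine iff_of_true ?_ rfl
      intro a b c; funext i
      exact hB2 i (f i) (fun hi => by rw [hi]; exact h2) _ _ _
    | false =>
      refine iff_of_false ?_ (by simp [h2])
      intro hax
      have key : selT 2 (f 2) 0 0 1 = selT 2 (f 2) 0 1 0 :=
        congrFun (hax (emb 2 0) (emb 2 0) (emb 2 1)) 2
      rw [h2] at key
      exact absurd key (by decide)
  · -- B3
    cases h3 : f 3 with
    | true =>
      refine iff_of_true ?_ rfl
      intro a b i
      exact hB3 i (f i) (fun hi => by rw [hi]; exact h3) _ _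
    | false =>
      refine iff_of_false ?_ (by simp [h3])
      intro hax
      have key : selL 3 (f 3) 0 0 (selT 3 (f 3) 0 0 0) = true := hax (emb 3 0) (emb 3 0) 3
      rw [h3] at key
      exact absurd key (by decide)
  · -- B4
    cases h4 : f 4 with
    | true =>
      refine iff_of_true ?_ rfl
      intro a b c x h i
      exact hB4 i (f i) (fun hi => by rw [hi]; exact h4) _ _ _ _ (h i)
    | false =>
      refine iff_of_false ?_ (by simp [h4])
      intro hax
      have key : selL 4 (f 4) 0 (selT 4 (f 4) 1 1 0) (selT 4 (f 4) 1 2 0) = true :=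
        hax (emb 4 1) (emb 4 1) (emb 4 2) (emb 4 0)
          (PL_emb f 4 (by rw [h4]; decide)) 4
      rw [h4] at key
      exact absurd key (by decide)
  · -- B6
    cases h5 : f 5 with
    | true =>
      refine iff_of_true ?_ rfl
      intro a b c x; funext i
      exact hB6 i (f i) (fun hi => by rw [hi]; exact h5) _ _ _ _
    | false =>
      refine iff_of_false ?_ (by simp [h5])
      intro hax
      have key : selT 5 (f 5) 0 2 1 = selT 5 (f 5) 1 (selT 5 (f 5) 0 2 1) 1 :=
        congrFun (hax (emb 5 0) (emb 5 2) (emb 5 1) (emb 5 1)) 5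
      rw [h5] at key
      exact absurd key (by decide)
  · -- B7
    cases h6 : f 6 with
    | true =>
      refine iff_of_true ?_ rfl
      intro h
      have key : selL 6 (f 6) 0 0 0 = true := h 6
      rw [h6] at key
      exact absurd key (by decide)
    | false =>
      refine iff_of_false ?_ (by simp [h6])
      intro hax
      exact hax (PL_emb f 6 (by rw [h6]; decide))
  · -- B8
    cases h7 : f 7 with
    | true =>
      refine iff_of_true ?_ rfl
      intro a b h; funext i
      exact hB8 i (f i) (fun hi => by rw [hi]; exact h7) _ _ (congrFun h i)
    | false =>
      refine iff_of_false ?_ (by simp [h7])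
      intro hax
      have hcon := hax (emb 7 0) (emb 7 2) ?_
      · exact absurd (congrFun hcon 7) (by decide)
      · rw [PT_emb]
        rw [h7]
        decide
end
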